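/- Let α > 0 and let N ≥ 1, i ≥ 1 be integers. Then Σ_{j=1}^{i} j · (Nα|α)_j · S_α(i,j) = N·([Nα]_i − [(N−1)α]_i), where (x|y)_n := Π_{k=0}^{n−1}(x − ky), [x]_n := Π_{k=0}^{n−1}(x + k), and S_α(i,j) := S(i,j;−1,α,0) are the generalized Stirling numbers defined by S_α(0,0) = 1, S_α(i,j) = 0 for j < 0 or j > i, and S_α(i+1,j) = S_α(i,j−1) + (i + αj)·S_α(i,j). Equivalently, the number K_i of occupied tables in the Chinese restaurant process with parameters κ = α, θ = Nα, having distribution P(K_i = j) = (Nα|α)_j S_α(i,j)/[Nα]_i, has mean E(K_i) = N − N·[(N−1)α]_i/[Nα]_i. -/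

import Mathlib

/-- the generalized Stirling numbers `S(i,j; a,b,r)` of Hsu and Shiue, defined by
`S(0,0) = 1`, `S(i,j) = 0` for `j > i` (automatic below), and the recursion
`S(i+1,j) = S(i,j-1) + (jb - ia + r) S(i,j)` (with `S(i,-1) := 0`). -/
noncomputable def gstir (a b r : ℝ) : ℕ → ℕ → ℝ
  | 0, 0 => 1
  | 0, _ + 1 => 0
  | i + 1, 0 => (r - i * a) * gstir a b r i 0
  | i + 1, j + 1 => gstir a b r i j + (((j : ℝ) + 1) * b - i * a + r) * gstir a b r i (j + 1)

/-- the generalized factorial `(x|y)_n := ∏_{k=0}^{n-1} (x - k y)`. -/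
noncomputable def genFall (x y : ℝ) (n : ℕ) : ℝ := ∏ k ∈ Finset.range n, (x - k * y)

/-- the rising factorial `[x]_n := x (x+1) ⋯ (x+n-1)`. -/
noncomputable def risingFac (x : ℝ) (n : ℕ) : ℝ := ∏ k ∈ Finset.range n, (x + k)


/-!
Both sums are instances of the Hsu–Shiue expansion `(x + r | a)_i = ∑_j S(i,j) (x | b)_j`,
proved by induction on `i` from the recursion. For the weighted sum, the telescoping identity
`j b (x | b)_j = x ((x | b)_j - (x - b | b)_j)` turns `∑_j j (x | b)_j S(i,j)` into the
difference of two such expansions; with `a = -1`, `r = 0` they are rising factorials.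
-/

open Finset

section GeneralizedStirling

variable (a b r : ℝ)

lemma gstir_eq_zero_of_lt {i j : ℕ} (h : i < j) : gstir a b r i j = 0 := by
  induction i generalizing j with
  | zero =>
    cases j with
    | zero => omega
    | succ j => rfl
  | succ i ih =>
    cases j with
    | zero => omega
    | succ j => simp [gstir, ih (by omega : i < j), ih (by omega : i < j + 1)]

lemma gstir_succ_zero (i : ℕ) :
    gstir a b r (i + 1) 0 = (r - i * a) * gstir a b r i 0 := by
  rw [gstir]

lemma gstir_succ_succ (i j : ℕ) :
    gstir a b r (i + 1) (j + 1) =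
      gstir a b r i j + (((j + 1 : ℕ) : ℝ) * b - i * a + r) * gstir a b r i (j + 1) := by
  simp [gstir]

lemma genFall_succ (x y : ℝ) (n : ℕ) : genFall x y (n + 1) = genFall x y n * (x - n * y) :=
  prod_range_succ _ _

lemma genFall_succ' (x y : ℝ) (n : ℕ) : genFall x y (n + 1) = x * genFall (x - y) y n := by
  simp only [genFall, prod_range_succ', Nat.cast_add, Nat.cast_one, Nat.cast_zero, zero_mul,
    sub_zero]
  rw [mul_comm]
  congr 1
  exact prod_congr rfl fun k _ => by ring

lemma nat_mul_mul_genFall (x y : ℝ) (n : ℕ) :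
    n * y * genFall x y n = x * (genFall x y n - genFall (x - y) y n) := by
  cases n with
  | zero => simp [genFall]
  | succ n =>
    rw [genFall_succ' x, genFall_succ (x - y)]
    push_cast
    ring

lemma genFall_neg_one (x : ℝ) (n : ℕ) : genFall x (-1) n = risingFac x n :=
  prod_congr rfl fun k _ => by ring

lemma risingFac_pos {x : ℝ} (hx : 0 < x) (n : ℕ) : 0 < risingFac x n :=
  prod_pos fun k _ => by positivity

theorem sum_genFall_mul_gstir (x : ℝ) (i : ℕ) :
    ∑ j ∈ range (i + 1), genFall x b j * gstir a b r i j = genFall (x + r) a i := by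
  induction i with
  | zero => simp [genFall, gstir]
  | succ i ih =>
    set c : ℕ → ℝ := fun j => j * b - i * a + r
    calc ∑ j ∈ range (i + 2), genFall x b j * gstir a b r (i + 1) j
        = ∑ j ∈ range (i + 1), genFall x b (j + 1) * gstir a b r i j
          + (∑ j ∈ range (i + 1), c (j + 1) * gstir a b r i (j + 1) * genFall x b (j + 1)
            + c 0 * gstir a b r i 0 * genFall x b 0) := by
          rw [sum_range_succ', ← add_assoc, ← sum_add_distrib, gstir_succ_zero]
          congr 1
          · exact sum_congr rfl fun j _ => by rw [gstir_succ_succ]; ring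
          · simp only [c, Nat.cast_zero, zero_mul]
            ring
      _ = ∑ j ∈ range (i + 1), genFall x b (j + 1) * gstir a b r i j
          + ∑ j ∈ range (i + 1), c j * gstir a b r i j * genFall x b j := by
          rw [← sum_range_succ' (fun j => c j * gstir a b r i j * genFall x b j),
            sum_range_succ (fun j => c j * gstir a b r i j * genFall x b j),
            gstir_eq_zero_of_lt a b r (Nat.lt_succ_self i), mul_zero, zero_mul,
            add_zero]
      _ = (∑ j ∈ range (i + 1), genFall x b j * gstir a b r i j) * (x + r - i * a) := by
          rw [← sum_add_distrib, sum_mul]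
          exact sum_congr rfl fun j _ => by rw [genFall_succ]; ring
      _ = genFall (x + r) a (i + 1) := by
          rw [ih, genFall_succ]

theorem mul_sum_nat_mul_genFall_mul_gstir (x : ℝ) (i : ℕ) :
    b * ∑ j ∈ range (i + 1), (j : ℝ) * genFall x b j * gstir a b r i j =
      x * (genFall (x + r) a i - genFall (x - b + r) a i) := by
  rw [← sum_genFall_mul_gstir, ← sum_genFall_mul_gstir, mul_sum, ← sum_sub_distrib, mul_sum]
  refine sum_congr rfl fun j _ => ?_
  linear_combination gstir a b r i j * nat_mul_mul_genFall x b j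

end GeneralizedStirling

theorem statement15_general (α : ℝ) (hα : 0 < α) (N i : ℕ) (hN : 1 ≤ N) :
    (∑ j ∈ Finset.Icc 1 i, (j : ℝ) * genFall ((N : ℝ) * α) α j * gstir (-1) α 0 i j) =
      (N : ℝ) * (risingFac ((N : ℝ) * α) i - risingFac (((N : ℝ) - 1) * α) i) ∧
    (∑ j ∈ Finset.Icc 1 i,
        (j : ℝ) * (genFall ((N : ℝ) * α) α j * gstir (-1) α 0 i j /
          risingFac ((N : ℝ) * α) i)) =
      (N : ℝ) - (N : ℝ) * risingFac (((N : ℝ) - 1) * α) i / risingFac ((N : ℝ) * α) i := by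
  have hmean : ∑ j ∈ Icc 1 i, (j : ℝ) * genFall (N * α) α j * gstir (-1) α 0 i j =
      N * (risingFac (N * α) i - risingFac ((N - 1) * α) i) := by
    have hIcc : Icc 1 i ⊆ range (i + 1) := fun j hj => by simp at hj ⊢; omega
    rw [sum_subset hIcc fun j hj hj' => by simp [show j = 0 by simp at hj hj'; omega]]
    have key := mul_sum_nat_mul_genFall_mul_gstir (-1) α 0 (N * α) i
    rw [add_zero, add_zero, genFall_neg_one, genFall_neg_one] at key
    refine mul_left_cancel₀ hα.ne' (key.trans ?_)
    ring_nf
  have hR : risingFac (N * α) i ≠ 0 :=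
    (risingFac_pos (mul_pos (by exact_mod_cast hN) hα) i).ne'
  refine ⟨hmean, ?_⟩
  simp_rw [mul_div_assoc', ← mul_assoc, ← sum_div, hmean]
  field_simp

/-- for `α > 0` and integers `N ≥ 1`, `i ≥ 1`,
`∑_{j=1}^{i} j (Nα|α)_j S_α(i,j) = N([Nα]_i - [(N-1)α]_i)` where `S_α(i,j) = S(i,j;-1,α,0)`;
equivalently, the Chinese restaurant table count `K_i` with distribution
`P(K_i = j) = (Nα|α)_j S_α(i,j)/[Nα]_i` has mean `E(K_i) = N - N [(N-1)α]_i/[Nα]_i`. -/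
theorem statement15 (α : ℝ) (hα : 0 < α) (N i : ℕ) (hN : 1 ≤ N) (hi : 1 ≤ i) :
    (∑ j ∈ Finset.Icc 1 i, (j : ℝ) * genFall ((N : ℝ) * α) α j * gstir (-1) α 0 i j) =
      (N : ℝ) * (risingFac ((N : ℝ) * α) i - risingFac (((N : ℝ) - 1) * α) i) ∧
    (∑ j ∈ Finset.Icc 1 i,
        (j : ℝ) * (genFall ((N : ℝ) * α) α j * gstir (-1) α 0 i j /
          risingFac ((N : ℝ) * α) i)) =
      (N : ℝ) - (N : ℝ) * risingFac (((N : ℝ) - 1) * α) i / risingFac ((N : ℝ) * α) i :=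
  statement15_general α hα N i hN
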